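/- Define f_O : ℝ → ℝ by f_O(x) = −1/(16x) if x < −1/4, f_O(x) = 1 − 1/(16x) if x > 1/4, and f_O(x) = x + 1/2 otherwise. Then f_O is a 1-Lipschitz continuous sigmoid function (continuous, non-decreasing, f_O(x) + f_O(−x) = 1, limits 0 and 1 at ∓∞), the map x ↦ x·f_O(−x) is monotonically non-decreasing, and sup_{x>0} x·f_O(−x) = 1/16. -/

import Mathlib

/-!
`fO` is point-symmetric about `(0, 1/2)`, so both `fO` and `x ↦ x - fO x` are monotone as soon
as they are monotone on `[0, ∞)`, where they are given by explicit formulas on `[0, 1/4]` and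
`[1/4, ∞)`. A function `f` with `f` and `id - f` both monotone is `1`-Lipschitz.
The swap error `x * fO (-x)` equals `x + 1/16`, `x/2 - x^2` and `1/16` on the three pieces; it is
non-decreasing and constant from `x = 1/4` on, so its supremum `1/16` is attained.
-/

open Filter

noncomputable def fO (x : ℝ) : ℝ :=
  if x < -(1/4) then -1/(16*x)
  else if (1/4 : ℝ) < x then 1 - 1/(16*x)
  else x + 1/2

open Set

theorem MonotoneOn.Icc_union_Ici {α β : Type*} [LinearOrder α] [Preorder β] {f : α → β}
    {a b : α} (hab : a ≤ b) (h₁ : MonotoneOn f (Icc a b)) (h₂ : MonotoneOn f (Ici b)) :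
    MonotoneOn f (Ici a) := by
  rw [← Icc_union_Ici_eq_Ici hab]
  exact h₁.union_right h₂ (isGreatest_Icc hab) isLeast_Ici

theorem monotone_of_add_neg_eq_of_monotoneOn_nonneg {f : ℝ → ℝ} {c : ℝ}
    (hsymm : ∀ x, f x + f (-x) = c) (hmono : MonotoneOn f (Ici 0)) : Monotone f := by
  have hodd : Monotone fun x => f x - c / 2 :=
    monotone_of_odd_of_monotoneOn_nonneg (fun x => by linarith [hsymm x])
      fun x hx y hy hxy => by linarith [hmono hx hy hxy]
  intro x y hxy
  linarith [hodd hxy]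

theorem lipschitzWith_one_of_monotone_of_monotone_sub {f : ℝ → ℝ} (hf : Monotone f)
    (hsub : Monotone fun x => x - f x) : LipschitzWith 1 f := by
  refine LipschitzWith.of_le_add fun x y => ?_
  rw [Real.dist_eq]
  rcases le_total x y with hxy | hyx
  · linarith [hf hxy, abs_nonneg (x - y)]
  · linarith [hsub hyx, le_abs_self (x - y)]

theorem monotoneOn_add_div_Ici {a c : ℝ} (ha : 0 < a) (hc : c ≤ a * a) :
    MonotoneOn (fun x => x + c / x) (Ici a) := by
  intro x hx y hy hxy
  have hx0 : 0 < x := ha.trans_le hx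
  have hy0 : 0 < y := ha.trans_le hy
  have hcxy : c ≤ x * y := hc.trans (mul_le_mul hx hy ha.le hx0.le)
  have hdiff : y + c / y - (x + c / x) = (y - x) * (x * y - c) / (x * y) := by
    field_simp
    ring
  simp only
  rw [← sub_nonneg, hdiff]
  exact div_nonneg (mul_nonneg (sub_nonneg.2 hxy) (sub_nonneg.2 hcxy)) (by positivity)

lemma fO_of_lt_neg_quarter {x : ℝ} (h : x < -(1/4)) : fO x = -1/(16*x) := if_pos h

lemma fO_of_mem_Icc {x : ℝ} (h : x ∈ Icc (-(1/4)) (1/4)) : fO x = x + 1/2 := by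
  rw [fO, if_neg (not_lt.2 h.1), if_neg (not_lt.2 h.2)]

lemma fO_of_quarter_le {x : ℝ} (h : 1/4 ≤ x) : fO x = 1 - 1/(16*x) := by
  rcases h.lt_or_eq with h | rfl
  · rw [fO, if_neg (by linarith), if_pos h]
  · norm_num [fO]

lemma fO_add_fO_neg_of_lt_neg_quarter {x : ℝ} (h : x < -(1/4)) : fO x + fO (-x) = 1 := by
  have hx : x ≠ 0 := by linarith
  rw [fO_of_lt_neg_quarter h, fO_of_quarter_le (by linarith)]
  field_simp
  ring

lemma fO_add_fO_neg (x : ℝ) : fO x + fO (-x) = 1 := by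
  rcases lt_or_ge x (-(1/4)) with hx | hx
  · exact fO_add_fO_neg_of_lt_neg_quarter hx
  rcases le_or_gt x (1/4) with hx' | hx'
  · rw [fO_of_mem_Icc ⟨hx, hx'⟩, fO_of_mem_Icc ⟨by linarith, by linarith⟩]
    ring
  · rw [add_comm, ← fO_add_fO_neg_of_lt_neg_quarter (x := -x) (by linarith), neg_neg]

lemma fO_monotone : Monotone fO := by
  refine monotone_of_add_neg_eq_of_monotoneOn_nonneg fO_add_fO_neg
    (MonotoneOn.Icc_union_Ici (b := 1/4) (by norm_num) ?_ ?_)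
  · intro x hx y hy hxy
    rw [fO_of_mem_Icc ⟨by linarith [hx.1], hx.2⟩, fO_of_mem_Icc ⟨by linarith [hy.1], hy.2⟩]
    linarith
  · intro x hx y hy hxy
    have hx0 : 0 < 16 * x := by linarith [mem_Ici.1 hx]
    rw [fO_of_quarter_le hx, fO_of_quarter_le hy]
    linarith [one_div_le_one_div_of_le hx0 (by linarith : 16 * x ≤ 16 * y)]

lemma sub_fO_monotone : Monotone fun x => x - fO x := by
  refine monotone_of_add_neg_eq_of_monotoneOn_nonneg (c := -1)
    (fun x => by linarith [fO_add_fO_neg x])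
    (MonotoneOn.Icc_union_Ici (b := 1/4) (by norm_num) ?_ ?_)
  · refine (monotoneOn_const (c := -(1/2 : ℝ))).congr fun x hx => ?_
    rw [fO_of_mem_Icc ⟨by linarith [hx.1], hx.2⟩]
    ring
  · intro x hx y hy hxy
    have h := monotoneOn_add_div_Ici (a := 1/4) (c := 1/16) (by norm_num) (by norm_num) hx hy hxy
    simp only [div_div] at h ⊢
    rw [fO_of_quarter_le hx, fO_of_quarter_le hy]
    linarith

lemma fO_lipschitzWith : LipschitzWith 1 fO :=
  lipschitzWith_one_of_monotone_of_monotone_sub fO_monotone sub_fO_monotone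

lemma fO_tendsto_atTop : Tendsto fO atTop (nhds 1) := by
  have h : Tendsto (fun x : ℝ => 1 - 1/(16*x)) atTop (nhds 1) := by
    have : Tendsto (fun x : ℝ => (16*x)⁻¹) atTop (nhds 0) :=
      tendsto_inv_atTop_zero.comp (tendsto_id.const_mul_atTop (by norm_num))
    simpa using this.const_sub 1
  refine h.congr' ?_
  filter_upwards [eventually_ge_atTop (1/4 : ℝ)] with x hx
  exact (fO_of_quarter_le hx).symm

lemma fO_tendsto_atBot : Tendsto fO atBot (nhds 0) := by
  have h : Tendsto (fun x => 1 - fO (-x)) atBot (nhds (1 - 1)) :=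
    (fO_tendsto_atTop.comp tendsto_neg_atBot_atTop).const_sub 1
  rw [sub_self] at h
  exact h.congr fun x => by linarith [fO_add_fO_neg x]

lemma mul_fO_neg_of_le_neg_quarter {x : ℝ} (h : x ≤ -(1/4)) : x * fO (-x) = x + 1/16 := by
  have hx : x ≠ 0 := by linarith
  rw [fO_of_quarter_le (by linarith)]
  field_simp
  ring

lemma mul_fO_neg_of_mem_Icc {x : ℝ} (h : x ∈ Icc (-(1/4)) (1/4)) :
    x * fO (-x) = x/2 - x^2 := by
  rw [fO_of_mem_Icc ⟨by linarith [h.2], by linarith [h.1]⟩]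
  ring

lemma mul_fO_neg_of_quarter_le {x : ℝ} (h : 1/4 ≤ x) : x * fO (-x) = 1/16 := by
  have hx : x ≠ 0 := by linarith
  rw [show fO (-x) = 1 - fO x by linarith [fO_add_fO_neg x], fO_of_quarter_le h]
  field_simp
  ring

lemma mul_fO_neg_monotone : Monotone fun x : ℝ => x * fO (-x) := by
  refine MonotoneOn.Iic_union_Ici (a := -(1/4)) ?_
    (MonotoneOn.Icc_union_Ici (b := 1/4) (by norm_num) ?_ ?_)
  · intro x hx y hy hxy
    simp only
    rw [mul_fO_neg_of_le_neg_quarter hx, mul_fO_neg_of_le_neg_quarter hy]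
    linarith
  · intro x hx y hy hxy
    simp only
    rw [mul_fO_neg_of_mem_Icc hx, mul_fO_neg_of_mem_Icc hy]
    nlinarith [hy.2]
  · intro x hx y hy _
    simp only
    rw [mul_fO_neg_of_quarter_le hx, mul_fO_neg_of_quarter_le hy]

theorem stmt_10 :
    Continuous fO ∧
    LipschitzWith 1 fO ∧
    Monotone fO ∧
    (∀ x : ℝ, fO x + fO (-x) = 1) ∧
    Tendsto fO atBot (nhds 0) ∧
    Tendsto fO atTop (nhds 1) ∧
    Monotone (fun x : ℝ => x * fO (-x)) ∧
    IsLUB ((fun x : ℝ => x * fO (-x)) '' Set.Ioi 0) (1/16) := by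
  refine ⟨fO_lipschitzWith.continuous, fO_lipschitzWith, fO_monotone, fO_add_fO_neg,
    fO_tendsto_atBot, fO_tendsto_atTop, mul_fO_neg_monotone, IsGreatest.isLUB ⟨?_, ?_⟩⟩
  · exact ⟨1/4, by norm_num, mul_fO_neg_of_quarter_le le_rfl⟩
  · rintro _ ⟨x, -, rfl⟩
    calc x * fO (-x) ≤ max x (1/4) * fO (-max x (1/4)) := mul_fO_neg_monotone (le_max_left _ _)
      _ = 1/16 := mul_fO_neg_of_quarter_le (le_max_right _ _)
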